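/- (3D version of Proposition 1.) Let $p \in 2\mathbb{N}\setminus\{0\}$, $n$ even, $\hat{\mathbf{g}}_t \in \mathbb{C}^{(np)^3}$ indexed over $[\![-np/2+1; np/2]\!]^3$, and let $\mathbf{v}_p \in \mathbb{C}^{(np)^3}$ be the $p$-fold zero-padding of $\mathbf{v} \in \mathbb{C}^{n^3}$ (supported on $[\![-n/2+1; n/2]\!]^3$). Then for all $\mathbf{k} \in [\![-n/2+1; n/2]\!]^3$: $\big(\mathbf{F}^{-1}(\hat{\mathbf{g}}_t \odot \mathbf{F}\mathbf{v}_p)\big)[\mathbf{k}] = \big(\mathbf{F}^{-1}(\hat{\mathbf{g}}^m_t \odot \mathbf{F}\mathbf{v}_2)\big)[\mathbf{k}]$, where $\mathbf{v}_2$ is the twofold zero-padding of $\mathbf{v}$ and $\mathbf{g}^m_t[\mathbf{k}] = \frac{8}{p^3} \sum_{\mathbf{s} \in [\![0; p/2-1]\!]^3} \mathbf{F}^{-1}\big(\hat{\mathbf{g}}_t[\tfrac{p}{2}\cdot - \mathbf{s}]\big)[\mathbf{k}]\, e^{-2\pi j \mathbf{k}^T\mathbf{s}/(np)}$. -/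

import Mathlib

open Complex

/-- The 3D index grid [[-N/2+1 ; N/2]]³. -/
noncomputable def cube3 (N : ℤ) : Finset (Fin 3 → ℤ) :=
  Fintype.piFinset fun _ => Finset.Icc (-N / 2 + 1) (N / 2)

/-- N³-point 3D DFT over the grid [[-N/2+1 ; N/2]]³. -/
noncomputable def dft3 (N : ℤ) (w : (Fin 3 → ℤ) → ℂ) (q : Fin 3 → ℤ) : ℂ :=
  ∑ k ∈ cube3 N, w k *
    Complex.exp (-(2 * (Real.pi : ℂ) * Complex.I * ((∑ i, k i * q i : ℤ) : ℂ) / (N : ℂ)))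

/-- N³-point 3D inverse DFT over the grid [[-N/2+1 ; N/2]]³. -/
noncomputable def idft3 (N : ℤ) (w : (Fin 3 → ℤ) → ℂ) (k : Fin 3 → ℤ) : ℂ :=
  (1 / (N : ℂ) ^ 3) * ∑ q ∈ cube3 N, w q *
    Complex.exp (2 * (Real.pi : ℂ) * Complex.I * ((∑ i, k i * q i : ℤ) : ℂ) / (N : ℂ))

/-!
Expanding the transforms, both sides are convolutions of `vp` with a kernel: the left side is
`∑ l, vp l * F⁻¹ ĝ (k - l)` on the `np`-grid, and, by orthogonality of the characters, the right
side is `∑ l, vp l * gᵐ (k - l)`, because `k - l` stays inside the `2n`-grid when `k` and `l` lie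
in the `n`-grid. The two kernels agree everywhere: every frequency of the `np`-grid is uniquely
`(p/2) q' - s` with `q'` in the `2n`-grid and `0 ≤ s < p/2`, and the phase `e^{2πi m·q/(np)}`
splits into `e^{2πi m·q'/(2n)} e^{-2πi m·s/(np)}`.
-/

open Finset

lemma sum_Icc_zpow_of_pow_eq_one {K : Type*} [Field K] [DecidableEq K] {z : K} {N : ℕ} (hN : 0 < N)
    (hz : z ^ N = 1) (a : ℤ) :
    ∑ q ∈ Icc a (a + N - 1), z ^ q = if z = 1 then (N : K) else 0 := by
  have hz0 : z ≠ 0 := by rintro rfl; simp [hN.ne'] at hz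
  have hIcc : Icc a (a + N - 1) = (range N).image fun j : ℕ => a + j := by
    ext q
    simp only [mem_Icc, mem_image, mem_range]
    constructor
    · rintro ⟨h₁, h₂⟩; exact ⟨(q - a).toNat, by omega, by omega⟩
    · rintro ⟨j, hj, rfl⟩; omega
  rw [hIcc, sum_image fun i _ j _ hij => by simpa using hij]
  simp_rw [zpow_add₀ hz0, zpow_natCast, ← mul_sum]
  split_ifs with hz1
  · simp [hz1]
  · rw [geom_sum_eq hz1, hz]; simp

lemma sum_Icc_exp_int_mul {N : ℤ} (hN : 0 < N) (a m : ℤ) :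
    ∑ q ∈ Icc a (a + N - 1), exp (2 * Real.pi * I * ((m * q : ℤ) : ℂ) / N) =
      if N ∣ m then (N : ℂ) else 0 := by
  lift N to ℕ using hN.le
  have hω := isPrimitiveRoot_exp N (by omega)
  have hexp : ∀ x : ℤ, exp (2 * Real.pi * I * (x : ℂ) / N) = exp (2 * Real.pi * I / N) ^ x :=
    fun x => by rw [← exp_int_mul]; ring_nf
  simp_rw [Int.cast_natCast, hexp, zpow_mul]
  have hpow : (exp (2 * Real.pi * I / N) ^ m) ^ N = 1 := by
    rw [← zpow_natCast, ← zpow_mul, mul_comm m, zpow_mul, hω.zpow_eq_one, one_zpow]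
  simp only [sum_Icc_zpow_of_pow_eq_one (by omega) hpow, hω.zpow_eq_one_iff_dvd]

-- Integer division floors, so the grid `[-N/2+1, N/2]` has `N` points also for odd `N`.
lemma Icc_neg_half_add_one_half_eq (N : ℤ) :
    Icc (-N / 2 + 1) (N / 2) = Icc (-N / 2 + 1) (-N / 2 + 1 + N - 1) := by
  congr 1; omega

lemma idft3_one {N : ℤ} (hN : 0 < N) (x : Fin 3 → ℤ) :
    idft3 N 1 x = if ∀ i, N ∣ x i then 1 else 0 := by
  have hN' : (N : ℂ) ≠ 0 := by exact_mod_cast hN.ne'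
  have hexp_sum : ∀ q : Fin 3 → ℤ, exp (2 * Real.pi * I * ((∑ i, x i * q i : ℤ) : ℂ) / N) =
      ∏ i, exp (2 * Real.pi * I * ((x i * q i : ℤ) : ℂ) / N) := fun q => by
    rw [← exp_sum]; push_cast [mul_sum, sum_div]; rfl
  simp only [idft3, cube3, Pi.one_apply, one_mul, hexp_sum, Icc_neg_half_add_one_half_eq]
  rw [sum_prod_piFinset _ fun i y => exp (2 * Real.pi * I * ((x i * y : ℤ) : ℂ) / N)]
  simp only [sum_Icc_exp_int_mul hN, Fintype.prod_ite_zero]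
  split_ifs <;> simp [hN']

lemma idft3_mul_dft3 (N : ℤ) (g v : (Fin 3 → ℤ) → ℂ) (k : Fin 3 → ℤ) :
    idft3 N (fun q => g q * dft3 N v q) k = ∑ l ∈ cube3 N, v l * idft3 N g (k - l) := by
  simp only [idft3, dft3, mul_sum, sum_mul]
  rw [sum_comm]
  refine sum_congr rfl fun l _ => sum_congr rfl fun q _ => ?_
  have hexp : exp (-(2 * Real.pi * I * ((∑ i, l i * q i : ℤ) : ℂ) / N)) *
      exp (2 * Real.pi * I * ((∑ i, k i * q i : ℤ) : ℂ) / N) =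
      exp (2 * Real.pi * I * ((∑ i, (k - l) i * q i : ℤ) : ℂ) / N) := by
    rw [← exp_add]
    push_cast [Pi.sub_apply, sub_mul, sum_sub_distrib]
    ring_nf
  linear_combination (1 / (N : ℂ) ^ 3 * g q * v l) * hexp

lemma eq_of_mem_cube3_of_dvd_sub {N : ℤ} {k l : Fin 3 → ℤ} (hk : k ∈ cube3 N) (hl : l ∈ cube3 N)
    (hdvd : ∀ i, N ∣ k i - l i) : k = l := by
  simp only [cube3, Fintype.mem_piFinset, mem_Icc] at hk hl
  funext i
  have := hk i
  have := hl i
  have := Int.eq_zero_of_abs_lt_dvd (hdvd i) (by rw [abs_lt]; omega)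
  omega

lemma idft3_dft3 {N : ℤ} (hN : 0 < N) (w : (Fin 3 → ℤ) → ℂ) {k : Fin 3 → ℤ} (hk : k ∈ cube3 N) :
    idft3 N (dft3 N w) k = w k := by
  have hconv := idft3_mul_dft3 N 1 w k
  simp only [Pi.one_apply, one_mul, idft3_one hN, Pi.sub_apply] at hconv
  rw [hconv, sum_eq_single_of_mem k hk]
  · simp
  · intro l hl hlk
    rw [if_neg fun hdvd => hlk (eq_of_mem_cube3_of_dvd_sub hk hl hdvd).symm, mul_zero]

lemma cube3_mono : Monotone cube3 := fun M N hMN q hq => by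
  simp only [cube3, Fintype.mem_piFinset, mem_Icc] at hq ⊢
  intro i
  have := hq i
  omega

lemma sub_mem_cube3_two_mul {n : ℤ} {k l : Fin 3 → ℤ} (hk : k ∈ cube3 n) (hl : l ∈ cube3 n) :
    k - l ∈ cube3 (2 * n) := by
  simp only [cube3, Fintype.mem_piFinset, mem_Icc, Pi.sub_apply] at hk hl ⊢
  intro i
  have := hk i
  have := hl i
  omega

lemma cube3_two_mul (M : ℤ) : cube3 (2 * M) = Fintype.piFinset fun _ => Icc (-M + 1) M := by
  simp only [cube3]
  congr! 3 <;> omega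

lemma mul_sub_mem_Icc_iff {h n e s : ℤ} (hs₀ : 0 ≤ s) (hs : s < h) :
    h * e - s ∈ Icc (-(n * h) + 1) (n * h) ↔ e ∈ Icc (-n + 1) n := by
  simp only [mem_Icc]
  constructor
  · rintro ⟨h₁, h₂⟩
    constructor <;> by_contra! <;> nlinarith
  · rintro ⟨h₁, h₂⟩
    constructor <;> nlinarith

lemma Icc_mul_eq_image₂ (n : ℤ) {h : ℕ} (hh : 0 < h) :
    Icc (-(n * h) + 1) (n * h) =
      image₂ (fun (s : ℕ) e => (h : ℤ) * e - s) (range h) (Icc (-n + 1) n) := by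
  have hh' : (0 : ℤ) < h := by exact_mod_cast hh
  ext q
  simp only [mem_image₂, mem_range]
  constructor
  · intro hq
    obtain ⟨s, hs⟩ := Int.eq_ofNat_of_zero_le (Int.emod_nonneg (-q) hh'.ne')
    have hsh : (s : ℤ) < h := hs ▸ Int.emod_lt_of_pos (-q) hh'
    have hq' : (h : ℤ) * -(-q / h) - s = q := by linarith [Int.mul_ediv_add_emod (-q) h]
    refine ⟨s, by exact_mod_cast hsh, -(-q / h), ?_, hq'⟩
    rwa [← mul_sub_mem_Icc_iff (Int.natCast_nonneg s) hsh, hq']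
  · rintro ⟨s, hs, e, he, rfl⟩
    exact (mul_sub_mem_Icc_iff (Int.natCast_nonneg s) (by exact_mod_cast hs)).mpr he

lemma mul_sub_inj {h s₁ s₂ : ℕ} {e₁ e₂ : ℤ} (hh : 0 < h) (hs₁ : s₁ < h) (hs₂ : s₂ < h)
    (heq : (h : ℤ) * e₁ - s₁ = h * e₂ - s₂) : s₁ = s₂ ∧ e₁ = e₂ := by
  have hs : (s₁ : ℤ) = s₂ := by
    have hdvd : (h : ℤ) ∣ s₁ - s₂ := ⟨e₁ - e₂, by linarith⟩
    have := Int.eq_zero_of_abs_lt_dvd hdvd (by rw [abs_lt]; omega)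
    omega
  refine ⟨by exact_mod_cast hs, ?_⟩
  rw [hs, sub_left_inj] at heq
  exact mul_left_cancel₀ (by exact_mod_cast hh.ne') heq

lemma sum_cube3_two_mul_mul (n : ℤ) {h : ℕ} (hh : 0 < h) (f : (Fin 3 → ℤ) → ℂ) :
    ∑ q ∈ cube3 (2 * n * h), f q =
      ∑ s ∈ Fintype.piFinset (fun _ => range h), ∑ q' ∈ cube3 (2 * n),
        f fun i => h * q' i - s i := by
  rw [mul_assoc, cube3_two_mul, cube3_two_mul, Icc_mul_eq_image₂ n hh, Fintype.piFinset_image₂,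
    ← image_uncurry_product, sum_image, sum_product]
  · rfl
  rintro ⟨s₁, q₁⟩ h₁ ⟨s₂, q₂⟩ h₂ heq
  simp only [coe_product, Set.mem_prod, mem_coe, Fintype.mem_piFinset, mem_range] at h₁ h₂
  have hinj := fun i => mul_sub_inj hh (h₁.1 i) (h₂.1 i) (congrFun heq i)
  exact Prod.ext (funext fun i => (hinj i).1) (funext fun i => (hinj i).2)

lemma idft3_eq_fold {n p : ℕ} (hn : 0 < n) (hp : 0 < p) (hpe : Even p)
    (g : (Fin 3 → ℤ) → ℂ) (m : Fin 3 → ℤ) :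
    idft3 ((n : ℤ) * p) g m = (8 / (p : ℂ) ^ 3) *
      ∑ s ∈ Fintype.piFinset (fun _ : Fin 3 => range (p / 2)),
        idft3 (2 * n) (fun q' => g fun i => (p : ℤ) / 2 * q' i - (s i : ℤ)) m *
          exp (-(2 * (Real.pi : ℂ) * I * ((∑ i, m i * (s i : ℤ) : ℤ) : ℂ) /
            ((n : ℂ) * (p : ℂ)))) := by
  obtain ⟨h, rfl⟩ := hpe
  have hh : 0 < h := by omega
  have hn' : (n : ℂ) ≠ 0 := by exact_mod_cast hn.ne'
  have hh' : (h : ℂ) ≠ 0 := by exact_mod_cast hh.ne'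
  rw [show ((h + h : ℕ) : ℤ) / 2 = h by omega, show (h + h) / 2 = h by omega,
    show (n : ℤ) * (h + h : ℕ) = 2 * n * h by push_cast; ring]
  simp only [idft3]
  rw [sum_cube3_two_mul_mul n hh, mul_sum, mul_sum]
  refine sum_congr rfl fun s _ => ?_
  rw [mul_sum, mul_sum, sum_mul, mul_sum]
  refine sum_congr rfl fun q' _ => ?_
  have hexp :
      exp (2 * Real.pi * I * ((∑ i, m i * (h * q' i - s i) : ℤ) : ℂ) / ((2 * n * h : ℤ) : ℂ)) =
        exp (2 * Real.pi * I * ((∑ i, m i * q' i : ℤ) : ℂ) / ((2 * n : ℤ) : ℂ)) *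
          exp (-(2 * Real.pi * I * ((∑ i, m i * (s i : ℤ) : ℤ) : ℂ) /
            ((n : ℂ) * ((h + h : ℕ) : ℂ)))) := by
    rw [← exp_add]
    congr 1
    push_cast [mul_sub, sum_sub_distrib]
    simp only [mul_left_comm _ (h : ℂ), ← mul_sum]
    field_simp
    ring
  rw [hexp]
  push_cast
  field_simp
  ring

theorem dft_folding_3d_general
    (n p : ℕ) (hn : 0 < n) (hp : 0 < p) (hpe : Even p)
    (ghat vp : (Fin 3 → ℤ) → ℂ)
    (hsupp : ∀ k : Fin 3 → ℤ, k ∉ cube3 (n : ℤ) → vp k = 0)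
    (gm : (Fin 3 → ℤ) → ℂ)
    (hgm : ∀ k : Fin 3 → ℤ, gm k = (8 / (p : ℂ) ^ 3) *
      ∑ s ∈ Fintype.piFinset (fun _ : Fin 3 => Finset.range (p / 2)),
        idft3 (2 * n) (fun q' => ghat fun i => (p : ℤ) / 2 * q' i - (s i : ℤ)) k *
          Complex.exp (-(2 * (Real.pi : ℂ) * Complex.I * ((∑ i, k i * (s i : ℤ) : ℤ) : ℂ) /
            ((n : ℂ) * (p : ℂ)))) ) :
    ∀ k ∈ cube3 (n : ℤ),
      idft3 ((n : ℤ) * p) (fun q => ghat q * dft3 ((n : ℤ) * p) vp q) k =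
        idft3 (2 * n) (fun q => dft3 (2 * n) gm q * dft3 (2 * n) vp q) k := by
  intro k hk
  have hvanish : ∀ {N : ℤ} (f : (Fin 3 → ℤ) → ℂ), ∀ l ∈ cube3 N, l ∉ cube3 n → vp l * f l = 0 :=
    fun _ l _ hl => by rw [hsupp l hl, zero_mul]
  have hsub_np : cube3 n ⊆ cube3 (n * p) :=
    cube3_mono (le_mul_of_one_le_right (by omega) (by omega))
  have hsub_2n : cube3 n ⊆ cube3 (2 * n) := cube3_mono (by omega)
  rw [idft3_mul_dft3, idft3_mul_dft3, ← sum_subset hsub_np (hvanish _),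
    ← sum_subset hsub_2n (hvanish _)]
  refine sum_congr rfl fun l hl => ?_
  rw [idft3_dft3 (by omega) gm (sub_mem_cube3_two_mul hk hl), hgm, idft3_eq_fold hn hp hpe]

/-- Proposition 1, 3D: the p-fold padded filtering F⁻¹(ĝ_t ⊙ F v_p) can be
computed on the twofold-padded grid with the modified kernel g^m_t. -/
theorem dft_folding_3d
    (n p : ℕ) (hn : 0 < n) (hp : 0 < p) (hne : Even n) (hpe : Even p)
    (ghat vp : (Fin 3 → ℤ) → ℂ)
    (hsupp : ∀ k : Fin 3 → ℤ, k ∉ cube3 (n : ℤ) → vp k = 0)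
    (gm : (Fin 3 → ℤ) → ℂ)
    (hgm : ∀ k : Fin 3 → ℤ, gm k = (8 / (p : ℂ) ^ 3) *
      ∑ s ∈ Fintype.piFinset (fun _ : Fin 3 => Finset.range (p / 2)),
        idft3 (2 * n) (fun q' => ghat fun i => (p : ℤ) / 2 * q' i - (s i : ℤ)) k *
          Complex.exp (-(2 * (Real.pi : ℂ) * Complex.I * ((∑ i, k i * (s i : ℤ) : ℤ) : ℂ) /
            ((n : ℂ) * (p : ℂ)))) ) :
    ∀ k ∈ cube3 (n : ℤ),
      idft3 ((n : ℤ) * p) (fun q => ghat q * dft3 ((n : ℤ) * p) vp q) k =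
        idft3 (2 * n) (fun q => dft3 (2 * n) gm q * dft3 (2 * n) vp q) k :=
  dft_folding_3d_general n p hn hp hpe ghat vp hsupp gm hgm
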